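/- For all integers n ≥ 1 and 0 ≤ k ≤ n−1, the number of plane binary trees on n nodes having exactly k nodes with a nonempty left subtree equals the Narayana number N(n,k+1) = (1/n)·binomial(n,k)·binomial(n,k+1). -/

import Mathlib

/-- The number of nodes of a plane binary tree having a nonempty left subtree. -/
def leftNodes : Tree Unit → ℕ
  | BinaryTree.nil => 0
  | BinaryTree.node _ BinaryTree.nil r => leftNodes r
  | BinaryTree.node _ (BinaryTree.node b ll lr) r => 1 + leftNodes (BinaryTree.node b ll lr) + leftNodes r

/-!
Count more generally the forests of `m` nonempty binary trees with `n` nodes and `k` left nodes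
in total; there are `m/n · C(n,k) · C(n,k+m)` of them. Deleting the root of the first tree and
putting its nonempty subtrees at the front of the forest shows that these numbers `F n m k` satisfy
`F (n+1) (m+1) k = F n m k + F n (m+1) k + F n (m+1) (k-1) + F n (m+2) (k-1)`, the four terms
counting the cases where both, only the left, only the right, or neither of the two subtrees is
empty; the last two terms are absent for `k = 0`.
By Pascal's rule and `(n+1) C(n,j) = (j+1) C(n+1,j+1)` the closed form satisfies the same
recurrence. The theorem is the case `m = 1`.
-/

open BinaryTree Finset

@[simp] lemma leftNodes_nil : leftNodes nil = 0 := rfl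

lemma leftNodes_node (a : Unit) (l r : BinaryTree Unit) :
    leftNodes (node a l r) = (if l = nil then 0 else 1) + leftNodes l + leftNodes r := by
  cases l <;> simp [leftNodes, add_comm]

lemma leftNodes_le_numNodes_sub_one (t : BinaryTree Unit) : leftNodes t ≤ t.numNodes - 1 := by
  induction t with
  | nil => rfl
  | node _ l r ihl ihr =>
    rw [leftNodes_node]
    cases l <;> simp only [numNodes, leftNodes_nil, reduceCtorEq, if_true, if_false] at * <;> omega

def forestsOfNumNodesEq : ℕ → ℕ → Finset (List (BinaryTree Unit))
  | n, 0 => if n = 0 then {[]} else ∅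
  | n, m + 1 => (antidiagonal n).biUnion fun p =>
      (treesOfNumNodesEq p.1 ×ˢ forestsOfNumNodesEq p.2 m).image fun q => q.1 :: q.2

lemma mem_forestsOfNumNodesEq {ts : List (BinaryTree Unit)} {n m : ℕ} :
    ts ∈ forestsOfNumNodesEq n m ↔ ts.length = m ∧ (ts.map numNodes).sum = n := by
  induction m generalizing n ts with
  | zero => unfold forestsOfNumNodesEq; split_ifs <;> cases ts <;> simp [*, eq_comm]
  | succ m ih => cases ts <;> simp [forestsOfNumNodesEq, ih, mem_treesOfNumNodesEq, and_comm]

def nonemptyForests (n m k : ℕ) : Finset (List (BinaryTree Unit)) :=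
  {ts ∈ forestsOfNumNodesEq n m | nil ∉ ts ∧ (ts.map leftNodes).sum = k}

lemma mem_nonemptyForests {ts : List (BinaryTree Unit)} {n m k : ℕ} :
    ts ∈ nonemptyForests n m k ↔
      ts.length = m ∧ (ts.map numNodes).sum = n ∧ nil ∉ ts ∧
        (ts.map leftNodes).sum = k := by
  simp [nonemptyForests, mem_forestsOfNumNodesEq, and_assoc]

lemma length_add_sum_leftNodes_le {ts : List (BinaryTree Unit)} (h : nil ∉ ts) :
    ts.length + (ts.map leftNodes).sum ≤ (ts.map numNodes).sum := by
  induction ts with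
  | nil => simp
  | cons t ts ih =>
    simp only [List.mem_cons, not_or] at h
    have hle := leftNodes_le_numNodes_sub_one t
    have hpos : t.numNodes ≠ 0 := by cases t <;> simp_all [numNodes]
    have ih' := ih h.2
    simp only [List.length_cons, List.map_cons, List.sum_cons]
    omega

lemma nonemptyForests_eq_empty {n m k : ℕ} (h : n < m + k) : nonemptyForests n m k = ∅ := by
  ext ts
  simp only [mem_nonemptyForests, notMem_empty, iff_false]
  rintro ⟨rfl, rfl, hnil, rfl⟩
  have := length_add_sum_leftNodes_le hnil
  omega

lemma nonemptyForests_zero_zero_zero : nonemptyForests 0 0 0 = {[]} := by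
  ext ts
  cases ts <;> simp [mem_nonemptyForests]

lemma nonemptyForests_succ_zero (n k : ℕ) : nonemptyForests (n + 1) 0 k = ∅ := by
  ext ts
  cases ts <;> simp [mem_nonemptyForests]

/-- Splitting off the right subtree of the first tree (`detachRight`) turns every forest into one
of these. -/
def nonemptyForestsRightNil (n m k : ℕ) : Finset (List (BinaryTree Unit)) :=
  {ts ∈ nonemptyForests n m k | (ts.headD nil).right = nil}

def detachRight : List (BinaryTree Unit) → List (BinaryTree Unit)
  | node a l r :: ts => node a l nil :: r :: ts
  | ts => ts

def attachRight : List (BinaryTree Unit) → List (BinaryTree Unit)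
  | node a l _ :: r :: ts => node a l r :: ts
  | ts => ts

lemma card_nonemptyForests_succ (n m k : ℕ) :
    #(nonemptyForests n (m + 1) k) =
      #(nonemptyForestsRightNil n (m + 1) k) + #(nonemptyForestsRightNil n (m + 2) k) := by
  rw [← card_filter_add_card_filter_not (fun ts => (ts.headD nil).right = nil)]
  congr 1
  refine card_nbij' detachRight attachRight ?_ ?_ ?_ ?_
  · rintro (_ | ⟨_ | ⟨_, l, _ | ⟨_, rl, rr⟩⟩, ts⟩) h <;>
      simp_all [nonemptyForestsRightNil, mem_nonemptyForests, leftNodes_node, detachRight, numNodes]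
    omega
  · rintro (_ | ⟨_ | ⟨_, l, _ | ⟨_, _, _⟩⟩, _ | ⟨_ | ⟨_, rl, rr⟩, ts⟩⟩) h <;>
      simp_all [nonemptyForestsRightNil, mem_nonemptyForests, leftNodes_node, attachRight, numNodes]
    omega
  · rintro (_ | ⟨_ | ⟨_, l, r⟩, ts⟩) h <;> simp_all [detachRight, attachRight]
  · rintro (_ | ⟨_ | ⟨_, l, _ | ⟨_, _, _⟩⟩, _ | ⟨_ | ⟨_, rl, rr⟩, ts⟩⟩) h <;>
      simp_all [nonemptyForestsRightNil, mem_nonemptyForests, attachRight, detachRight]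

lemma card_filter_left_eq_nil (n m k : ℕ) :
    #{ts ∈ nonemptyForestsRightNil (n + 1) (m + 1) k | (ts.headD nil).left = nil} =
      #(nonemptyForests n m k) := by
  refine card_nbij' List.tail (node () nil nil :: ·) ?_ ?_ ?_ ?_
  · rintro (_ | ⟨_ | ⟨_, _ | ⟨_, _, _⟩, _ | ⟨_, _, _⟩⟩, ts⟩) h <;>
      simp_all [nonemptyForestsRightNil, mem_nonemptyForests, leftNodes_node, numNodes]
    omega
  · intro ts h
    simp_all [nonemptyForestsRightNil, mem_nonemptyForests, leftNodes_node, numNodes]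
    omega
  · rintro (_ | ⟨_ | ⟨_, _ | ⟨_, _, _⟩, _ | ⟨_, _, _⟩⟩, ts⟩) h <;>
      simp_all [nonemptyForestsRightNil, mem_nonemptyForests]
  · intro ts h
    rfl

def detachLeft : List (BinaryTree Unit) → List (BinaryTree Unit)
  | node _ l _ :: ts => l :: ts
  | ts => ts

def attachLeft : List (BinaryTree Unit) → List (BinaryTree Unit)
  | l :: ts => node () l nil :: ts
  | [] => []

lemma card_filter_left_ne_nil (n m k : ℕ) :
    #{ts ∈ nonemptyForestsRightNil (n + 1) (m + 1) (k + 1) | (ts.headD nil).left ≠ nil} =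
      #(nonemptyForests n (m + 1) k) := by
  refine card_nbij' detachLeft attachLeft ?_ ?_ ?_ ?_
  · rintro (_ | ⟨_ | ⟨_, _ | ⟨_, _, _⟩, _ | ⟨_, _, _⟩⟩, ts⟩) h <;>
      simp_all [nonemptyForestsRightNil, mem_nonemptyForests, leftNodes_node, detachLeft, numNodes]
    omega
  · rintro (_ | ⟨_ | ⟨_, _, _⟩, ts⟩) h <;>
      simp_all [nonemptyForestsRightNil, mem_nonemptyForests, leftNodes_node, attachLeft, numNodes]
    omega
  · rintro (_ | ⟨_ | ⟨_, _ | ⟨_, _, _⟩, _ | ⟨_, _, _⟩⟩, ts⟩) h <;>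
      simp_all [nonemptyForestsRightNil, mem_nonemptyForests, detachLeft, attachLeft]
  · rintro (_ | ⟨_ | ⟨_, _, _⟩, ts⟩) h <;>
      simp_all [mem_nonemptyForests, detachLeft, attachLeft]

lemma filter_left_ne_nil_eq_empty (n m : ℕ) :
    {ts ∈ nonemptyForestsRightNil (n + 1) (m + 1) 0 | (ts.headD nil).left ≠ nil} = ∅ := by
  refine filter_eq_empty_iff.2 ?_
  rintro (_ | ⟨_ | ⟨_, _ | ⟨_, _, _⟩, r⟩, ts⟩) h <;>
    simp_all [nonemptyForestsRightNil, mem_nonemptyForests, leftNodes_node]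

lemma card_nonemptyForests_succ_succ_succ (n m k : ℕ) :
    #(nonemptyForests (n + 1) (m + 1) (k + 1)) =
      #(nonemptyForests n m (k + 1)) + #(nonemptyForests n (m + 1) k) +
        #(nonemptyForests n (m + 1) (k + 1)) + #(nonemptyForests n (m + 2) k) := by
  rw [card_nonemptyForests_succ]
  simp only [← card_filter_add_card_filter_not (s := nonemptyForestsRightNil _ _ _)
    (fun ts => (ts.headD nil).left = nil), card_filter_left_eq_nil, card_filter_left_ne_nil]
  ring

lemma card_nonemptyForests_succ_succ_zero (n m : ℕ) :
    #(nonemptyForests (n + 1) (m + 1) 0) =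
      #(nonemptyForests n m 0) + #(nonemptyForests n (m + 1) 0) := by
  rw [card_nonemptyForests_succ]
  simp only [← card_filter_add_card_filter_not (s := nonemptyForestsRightNil _ _ _)
    (fun ts => (ts.headD nil).left = nil), card_filter_left_eq_nil, filter_left_ne_nil_eq_empty,
    card_empty, add_zero]

/-- `n` times the number `m/n · C(n,k) · C(n,k+m)` of forests, so that no division is needed. -/
def forestNarayana (n m k : ℕ) : ℕ := m * n.choose k * n.choose (k + m)

lemma mul_forestNarayana_succ_succ_zero (n m : ℕ) :
    n * forestNarayana (n + 1) (m + 1) 0 =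
      (n + 1) * (forestNarayana n m 0 + forestNarayana n (m + 1) 0) := by
  have absorb := Nat.add_one_mul_choose_eq n m
  have pascal := Nat.choose_succ_succ' n m
  simp only [forestNarayana, Nat.choose_zero_right, zero_add, mul_one]
  zify at absorb pascal ⊢
  linear_combination absorb + (n + 1 : ℤ) * (m + 1) * pascal

lemma mul_forestNarayana_succ_succ_succ (n m k : ℕ) :
    n * forestNarayana (n + 1) (m + 1) (k + 1) =
      (n + 1) * (forestNarayana n m (k + 1) + forestNarayana n (m + 1) k +
        forestNarayana n (m + 1) (k + 1) + forestNarayana n (m + 2) k) := by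
  have absorb₁ := Nat.add_one_mul_choose_eq n k
  have absorb₂ := Nat.add_one_mul_choose_eq n (k + m + 1)
  have pascal₁ := Nat.choose_succ_succ' n k
  have pascal₂ := Nat.choose_succ_succ' n (k + m + 1)
  simp only [forestNarayana, show k + 1 + (m + 1) = k + m + 1 + 1 by ring,
    show k + 1 + m = k + m + 1 by ring, show k + (m + 1) = k + m + 1 by ring,
    show k + (m + 2) = k + m + 1 + 1 by ring]
  zify at absorb₁ absorb₂ pascal₁ pascal₂ ⊢
  set A : ℤ := (n.choose k : ℤ)
  set B : ℤ := (n.choose (k + 1) : ℤ)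
  set C : ℤ := (n.choose (k + m + 1) : ℤ)
  set P : ℤ := ((n + 1).choose (k + 1) : ℤ)
  set Q : ℤ := ((n + 1).choose (k + m + 1 + 1) : ℤ)
  linear_combination (n + 1 : ℤ) * (m * C + (m + 1) * (Q - C)) * pascal₁ +
    (n + 1 : ℤ) * ((m + 1) * B + (m + 2) * A) * pascal₂ - Q * absorb₁ + P * absorb₂

lemma mul_card_nonemptyForests (n m k : ℕ) :
    n * #(nonemptyForests n m k) = forestNarayana n m k := by
  induction n generalizing m k with
  | zero => cases m <;> cases k <;> simp [forestNarayana]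
  | succ n ih =>
    rcases m with _ | m
    · simp [forestNarayana, nonemptyForests_succ_zero]
    rcases Nat.eq_zero_or_pos n with rfl | hn
    · rcases k with _ | k
      · rw [card_nonemptyForests_succ_succ_zero]
        cases m <;> simp [forestNarayana, nonemptyForests_zero_zero_zero, nonemptyForests_eq_empty,
          Nat.choose_eq_zero_iff]
      · rw [card_nonemptyForests_succ_succ_succ]
        simp [forestNarayana, nonemptyForests_eq_empty, Nat.choose_eq_zero_iff]
        omega
    · apply Nat.eq_of_mul_eq_mul_left hn
      rcases k with _ | k
      · rw [mul_forestNarayana_succ_succ_zero, card_nonemptyForests_succ_succ_zero, ← ih, ← ih]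
        ring
      · rw [mul_forestNarayana_succ_succ_succ, card_nonemptyForests_succ_succ_succ, ← ih, ← ih,
          ← ih, ← ih]
        ring

lemma ncard_trees_eq_card_nonemptyForests_one {n : ℕ} (hn : 0 < n) (k : ℕ) :
    {t : BinaryTree Unit | t.numNodes = n ∧ leftNodes t = k}.ncard =
      #(nonemptyForests n 1 k) := by
  rw [← Set.ncard_coe_finset, ← Set.ncard_image_of_injective _ List.singleton_injective]
  congr 1
  ext ts
  rcases ts with _ | ⟨t, _ | _⟩ <;> simp [mem_nonemptyForests]
  rintro rfl -
  cases t <;> simp_all [numNodes]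

theorem card_trees_leftNodes_eq_narayana_general (n k : ℕ) (hn : 1 ≤ n) :
    n * Nat.card {t : Tree Unit | t.numNodes = n ∧ leftNodes t = k} =
    n.choose k * n.choose (k + 1) := by
  rw [Nat.card_coe_set_eq, ncard_trees_eq_card_nonemptyForests_one hn, mul_card_nonemptyForests,
    forestNarayana, one_mul, add_comm]

/-- The number of plane binary trees on `n` nodes having exactly `k` nodes with a
nonempty left subtree equals the Narayana number
`N(n,k+1) = (1/n) * choose n k * choose n (k+1)` (stated multiplied through by `n` to
avoid rational arithmetic). -/
theorem card_trees_leftNodes_eq_narayana (n k : ℕ) (hn : 1 ≤ n) (hk : k ≤ n - 1) :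
    n * Nat.card {t : Tree Unit | t.numNodes = n ∧ leftNodes t = k} =
    n.choose k * n.choose (k + 1) :=
  card_trees_leftNodes_eq_narayana_general n k hn
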